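/- arXiv:2511.12289 — 5 statements merged into one kernel-verified Lean document; each statement's English description precedes it below -/
import Mathlib

section
/- Let k > 0 and let c : [0,∞) → ℝ be continuous with 0 < δ ≤ c(t) ≤ M for all t ≥ 0, for some constants δ, M. If η : [0,∞) → ℝ is differentiable and satisfies the closed-loop equation η'(t) = −c(t)·k·(exp(η(t)) − 1) for all t ≥ 0, then t ↦ |η(t)| is nonincreasing and η(t) → 0 as t → ∞. -/
/-!
Along a solution, `V = η²` is a Lyapunov function: `V' = -2 c k η (exp η - 1) ≤ 0`, because
`η` and `exp η - 1` have the same sign; hence `|η|` is nonincreasing. While `|η| ≥ ε`, the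
product `η (exp η - 1)` is bounded below by `ε (1 - exp (-ε)) > 0` and `c ≥ δ`, so `V` would
decrease at a uniform linear rate and turn negative; thus `|η|` drops below every `ε > 0`,
and stays there by monotonicity.
-/

open Real Set Filter Topology

section Lyapunov

variable {η η' : ℝ → ℝ}

theorem antitoneOn_sq_add_mul_of_mul_deriv_le {m : ℝ}
    (hη : ∀ t ∈ Ici (0 : ℝ), HasDerivAt η (η' t) t)
    (hm : ∀ t ∈ Ici (0 : ℝ), η t * η' t ≤ -m) :
    AntitoneOn (fun t => η t ^ 2 + 2 * m * t) (Ici 0) := by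
  have hV : ∀ t ∈ Ici (0 : ℝ),
      HasDerivAt (fun t => η t ^ 2 + 2 * m * t) (2 * (η t * η' t + m)) t := fun t ht =>
    (((hη t ht).pow 2).add ((hasDerivAt_id t).const_mul (2 * m))).congr_deriv
      (by simp only [Nat.cast_ofNat, mul_one]; ring)
  refine antitoneOn_of_hasDerivWithinAt_nonpos (f' := fun t => 2 * (η t * η' t + m))
    (convex_Ici 0) (fun t ht => (hV t ht).continuousAt.continuousWithinAt)
    (fun t ht => ?_) (fun t ht => ?_)
  · rw [interior_Ici] at ht
    exact (hV t (mem_Ici_of_Ioi ht)).hasDerivWithinAt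
  · rw [interior_Ici] at ht
    linarith [hm t (mem_Ici_of_Ioi ht)]

theorem antitoneOn_abs_of_mul_deriv_nonpos
    (hη : ∀ t ∈ Ici (0 : ℝ), HasDerivAt η (η' t) t)
    (h : ∀ t ∈ Ici (0 : ℝ), η t * η' t ≤ 0) :
    AntitoneOn (fun t => |η t|) (Ici 0) := by
  have hsq := antitoneOn_sq_add_mul_of_mul_deriv_le (m := 0) hη (by simpa using h)
  intro s hs t ht hst
  simpa [sq_le_sq] using hsq hs ht hst

theorem exists_abs_lt_of_mul_deriv_le {ε m : ℝ} (hm : 0 < m)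
    (hη : ∀ t ∈ Ici (0 : ℝ), HasDerivAt η (η' t) t)
    (h : ∀ t ∈ Ici (0 : ℝ), ε ≤ |η t| → η t * η' t ≤ -m) :
    ∃ t ∈ Ici (0 : ℝ), |η t| < ε := by
  by_contra! hfar
  have hV := antitoneOn_sq_add_mul_of_mul_deriv_le hη fun t ht => h t ht (hfar t ht)
  set T := (η 0 ^ 2 + 1) / (2 * m)
  have hT : 0 ≤ T := by positivity
  have hmT : 2 * m * T = η 0 ^ 2 + 1 := mul_div_cancel₀ _ (by positivity)
  have := hV self_mem_Ici hT hT
  simp only [mul_zero, add_zero] at this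
  nlinarith [sq_nonneg (η T)]

theorem tendsto_zero_of_mul_deriv_le
    (hη : ∀ t ∈ Ici (0 : ℝ), HasDerivAt η (η' t) t)
    (h : ∀ t ∈ Ici (0 : ℝ), η t * η' t ≤ 0)
    (hε : ∀ ε > 0, ∃ m > 0, ∀ t ∈ Ici (0 : ℝ), ε ≤ |η t| → η t * η' t ≤ -m) :
    Tendsto η atTop (𝓝 0) := by
  have hanti := antitoneOn_abs_of_mul_deriv_nonpos hη h
  rw [Metric.tendsto_atTop]
  intro ε ε_pos
  obtain ⟨m, hm, hmε⟩ := hε ε ε_pos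
  obtain ⟨t₀, ht₀, hlt⟩ := exists_abs_lt_of_mul_deriv_le hm hη hmε
  refine ⟨t₀, fun t ht => ?_⟩
  rw [Real.dist_eq, sub_zero]
  exact (hanti ht₀ (le_trans ht₀ ht) ht).trans_lt hlt

end Lyapunov

theorem mul_exp_sub_one_nonneg (x : ℝ) : 0 ≤ x * (exp x - 1) := by
  rcases le_total 0 x with hx | hx
  · exact mul_nonneg hx (sub_nonneg.mpr (one_le_exp hx))
  · exact mul_nonneg_of_nonpos_of_nonpos hx (sub_nonpos.mpr (exp_le_one_iff.mpr hx))

theorem mul_one_sub_exp_neg_le_mul_exp_sub_one {a x : ℝ} (ha : 0 ≤ a) (hx : a ≤ |x|) :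
    a * (1 - exp (-a)) ≤ x * (exp x - 1) := by
  have hea : exp (-a) ≤ 1 := exp_le_one_iff.mpr (neg_nonpos.mpr ha)
  rcases le_abs.mp hx with hax | hax
  · -- `1 - exp (-a) ≤ exp a - 1` since `exp a + exp (-a) ≥ 2`
    have : 1 - exp (-a) ≤ exp x - 1 := by
      linarith [add_one_le_exp a, add_one_le_exp (-a), exp_le_exp.mpr hax]
    exact mul_le_mul hax this (by linarith) (ha.trans hax)
  · have : 1 - exp (-a) ≤ 1 - exp x := by linarith [exp_le_exp.mpr (le_neg.mp hax)]
    nlinarith [mul_le_mul hax this (by linarith) (by linarith)]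

theorem stmt_0_general (k δ M : ℝ) (hk : 0 < k) (hδ : 0 < δ)
    (c η : ℝ → ℝ)
    (hcb : ∀ t, 0 ≤ t → δ ≤ c t ∧ c t ≤ M)
    (hη : ∀ t, 0 ≤ t → HasDerivAt η (-(c t) * k * (Real.exp (η t) - 1)) t) :
    AntitoneOn (fun t => |η t|) (Set.Ici 0) ∧
      Filter.Tendsto η Filter.atTop (nhds 0) := by
  have hdiss : ∀ t ∈ Ici (0 : ℝ),
      η t * (-(c t) * k * (exp (η t) - 1)) = -(c t * k) * (η t * (exp (η t) - 1)) :=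
    fun _ _ => by ring
  have hck : ∀ t ∈ Ici (0 : ℝ), δ * k ≤ c t * k := fun t ht =>
    mul_le_mul_of_nonneg_right (hcb t ht).1 hk.le
  have hck_nonneg : ∀ t ∈ Ici (0 : ℝ), 0 ≤ c t * k := fun t ht =>
    (mul_pos hδ hk).le.trans (hck t ht)
  have hnonpos : ∀ t ∈ Ici (0 : ℝ), η t * (-(c t) * k * (exp (η t) - 1)) ≤ 0 := by
    intro t ht
    rw [hdiss t ht, neg_mul]
    exact neg_nonpos.mpr (mul_nonneg (hck_nonneg t ht) (mul_exp_sub_one_nonneg _))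
  refine ⟨antitoneOn_abs_of_mul_deriv_nonpos hη hnonpos,
    tendsto_zero_of_mul_deriv_le hη hnonpos fun ε hε => ?_⟩
  have hgap : 0 < ε * (1 - exp (-ε)) :=
    mul_pos hε (sub_pos.mpr (exp_lt_one_iff.mpr (neg_lt_zero.mpr hε)))
  refine ⟨δ * k * (ε * (1 - exp (-ε))), by positivity, fun t ht hfar => ?_⟩
  rw [hdiss t ht, neg_mul, neg_le_neg_iff]
  exact mul_le_mul (hck t ht) (mul_one_sub_exp_neg_le_mul_exp_sub_one hε.le hfar) hgap.le
    (hck_nonneg t ht)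

/-- Reduced scalar form of Theorem 3.6: under the feedback law, the projected
aquatic dynamics satisfy `η' = -c(t)·k·(exp(η)-1)` with `c` continuous and
bounded between positive constants; then `|η|` is nonincreasing on `[0,∞)`
and `η(t) → 0` as `t → ∞`. -/
theorem stmt_0 (k δ M : ℝ) (hk : 0 < k) (hδ : 0 < δ)
    (c η : ℝ → ℝ)
    (hc : ContinuousOn c (Set.Ici 0))
    (hcb : ∀ t, 0 ≤ t → δ ≤ c t ∧ c t ≤ M)
    (hη : ∀ t, 0 ≤ t → HasDerivAt η (-(c t) * k * (Real.exp (η t) - 1)) t) :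
    AntitoneOn (fun t => |η t|) (Set.Ici 0) ∧
      Filter.Tendsto η Filter.atTop (nhds 0) :=
  stmt_0_general k δ M hk hδ c η hcb hη
end

section
/- Let k > 0, let c : [0,∞) → ℝ be continuous with 0 < δ ≤ c(t) ≤ M for all t ≥ 0, and let v : [0,∞) → ℝ be continuous with |v(t)| ≤ C·exp(−σ t) for all t ≥ 0, for some constants C ≥ 0 and σ > 0. If η : [0,∞) → ℝ is differentiable and satisfies η'(t) = −c(t)·k·(exp(η(t) + v(t)) − 1) for all t ≥ 0, then η(t) → 0 as t → ∞. -/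
/-!
With `y = exp (-η)` the equation becomes linear, `y' = k c(t) (exp (v t) - y)`: `y` relaxes at
rate at least `α = k δ` towards the forcing `exp (v t)`, which tends to `1`. Once the forcing stays
below `ε`, the barrier `ε + D exp (-α (t - T))` can never be crossed from below, so `y` eventually
stays below any bound exceeding `lim exp v = 1`; symmetrically from below. Hence `y → 1` and `η → 0`.
-/

open Filter Real Topology

lemma tendsto_exp_neg_mul_atTop {α : ℝ} (hα : 0 < α) :
    Tendsto (fun t => exp (-α * t)) atTop (𝓝 0) :=
  tendsto_exp_atBot.comp (tendsto_id.const_mul_atTop_of_neg (neg_neg_of_pos hα))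

section RelaxationEquation

variable {f a g : ℝ → ℝ}

lemma le_add_mul_exp_of_hasDerivAt_eq_mul_sub {T α ε D : ℝ} (hα : 0 < α) (hD : 0 ≤ D)
    (hfT : f T ≤ ε + D) (hf : ∀ t ≥ T, HasDerivAt f (a t * (g t - f t)) t)
    (ha : ∀ t ≥ T, α ≤ a t) (hg : ∀ t ≥ T, g t < ε) :
    ∀ t ≥ T, f t ≤ ε + D * exp (-α * (t - T)) := by
  intro t ht
  have hB : ∀ s, HasDerivAt (fun s => ε + D * exp (-α * (s - T)))
      (D * (exp (-α * (s - T)) * (-α * 1))) s := fun s =>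
    ((((hasDerivAt_id s).sub_const T).const_mul (-α)).exp.const_mul D).const_add ε
  refine image_le_of_deriv_right_lt_deriv_boundary (a := T) (b := t)
    (fun s hs => (hf s hs.1).continuousAt.continuousWithinAt)
    (fun s hs => (hf s hs.1).hasDerivWithinAt) (by simpa using hfT) hB ?_ ⟨ht, le_rfl⟩
  rintro s ⟨hsT, -⟩ hfs
  have hDe : 0 ≤ D * exp (-α * (s - T)) := by positivity
  have has : α ≤ a s := ha s hsT
  -- at a contact point `f' = a (g - ε) - a D e^{-α (s - T)} < -α D e^{-α (s - T)} = B'`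
  rw [hfs]
  nlinarith [hg s hsT]

lemma eventually_lt_of_hasDerivAt_eq_mul_sub {α ε b : ℝ} (hα : 0 < α) (hεb : ε < b)
    (hf : ∀ᶠ t in atTop, HasDerivAt f (a t * (g t - f t)) t)
    (ha : ∀ᶠ t in atTop, α ≤ a t) (hg : ∀ᶠ t in atTop, g t < ε) :
    ∀ᶠ t in atTop, f t < b := by
  obtain ⟨T, hT⟩ := eventually_atTop.1 ((hf.and ha).and hg)
  have hbarrier := le_add_mul_exp_of_hasDerivAt_eq_mul_sub (D := |f T - ε|) hα (abs_nonneg _)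
    (by linarith [le_abs_self (f T - ε)]) (fun t ht => (hT t ht).1.1)
    (fun t ht => (hT t ht).1.2) (fun t ht => (hT t ht).2)
  have hdecay : Tendsto (fun t => ε + |f T - ε| * exp (-α * (t - T))) atTop (𝓝 ε) := by
    simpa [sub_eq_add_neg] using ((tendsto_exp_neg_mul_atTop hα).comp
      (tendsto_atTop_add_const_right _ (-T) tendsto_id)).const_mul |f T - ε| |>.const_add ε
  filter_upwards [hdecay.eventually_lt_const hεb, eventually_ge_atTop T] with t hlt ht
  exact (hbarrier t ht).trans_lt hlt

lemma tendsto_of_hasDerivAt_eq_mul_sub {α L : ℝ} (hα : 0 < α)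
    (hf : ∀ᶠ t in atTop, HasDerivAt f (a t * (g t - f t)) t)
    (ha : ∀ᶠ t in atTop, α ≤ a t) (hg : Tendsto g atTop (𝓝 L)) :
    Tendsto f atTop (𝓝 L) := by
  refine tendsto_order.2 ⟨fun b hb => ?_, fun b hb => ?_⟩
  · have hf_neg : ∀ᶠ t in atTop, HasDerivAt (-f) (a t * (-g t - (-f) t)) t := by
      filter_upwards [hf] with t ht
      exact ht.neg.congr_deriv (by simp only [Pi.neg_apply]; ring)
    have hg_neg : ∀ᶠ t in atTop, -g t < -((b + L) / 2) := by
      filter_upwards [hg.eventually_const_lt (by linarith : (b + L) / 2 < L)] with t ht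
      exact neg_lt_neg ht
    filter_upwards [eventually_lt_of_hasDerivAt_eq_mul_sub hα
      (neg_lt_neg (by linarith : b < (b + L) / 2)) hf_neg ha hg_neg] with t ht
    exact neg_lt_neg_iff.1 ht
  · exact eventually_lt_of_hasDerivAt_eq_mul_sub hα (by linarith : (L + b) / 2 < b) hf ha
      (hg.eventually_lt_const (by linarith : L < (L + b) / 2))

end RelaxationEquation

theorem stmt_1_general (k δ M C σ : ℝ) (hk : 0 < k) (hδ : 0 < δ) (hσ : 0 < σ)
    (c v η : ℝ → ℝ)
    (hcb : ∀ t, 0 ≤ t → δ ≤ c t ∧ c t ≤ M)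
    (hv : ∀ t, 0 ≤ t → |v t| ≤ C * Real.exp (-σ * t))
    (hη : ∀ t, 0 ≤ t → HasDerivAt η (-(c t) * k * (Real.exp (η t + v t) - 1)) t) :
    Filter.Tendsto η Filter.atTop (nhds 0) := by
  have hv0 : Tendsto v atTop (𝓝 0) :=
    squeeze_zero_norm' (eventually_atTop.2 ⟨0, hv⟩)
      (by simpa using (tendsto_exp_neg_mul_atTop hσ).const_mul C)
  have hy_deriv : ∀ᶠ t in atTop,
      HasDerivAt (fun t => exp (-η t)) (c t * k * (exp (v t) - exp (-η t))) t := by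
    filter_upwards [eventually_ge_atTop 0] with t ht
    refine (hη t ht).neg.exp.congr_deriv ?_
    rw [Pi.neg_apply, exp_add, exp_neg]
    field_simp
  have hy : Tendsto (fun t => exp (-η t)) atTop (𝓝 1) :=
    tendsto_of_hasDerivAt_eq_mul_sub (mul_pos hδ hk) hy_deriv
      (eventually_atTop.2 ⟨0, fun t ht => mul_le_mul_of_nonneg_right (hcb t ht).1 hk.le⟩)
      (by simpa using hv0.rexp)
  simpa using (hy.log one_ne_zero).neg

/-- Reduced scalar form of Theorem 3.8: with an exponentially decaying
perturbation `v`, solutions of `η' = -c(t)·k·(exp(η+v)-1)` converge to `0`. -/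
theorem stmt_1 (k δ M C σ : ℝ) (hk : 0 < k) (hδ : 0 < δ) (hC : 0 ≤ C) (hσ : 0 < σ)
    (c v η : ℝ → ℝ)
    (hc : ContinuousOn c (Set.Ici 0))
    (hcb : ∀ t, 0 ≤ t → δ ≤ c t ∧ c t ≤ M)
    (hvcont : ContinuousOn v (Set.Ici 0))
    (hv : ∀ t, 0 ≤ t → |v t| ≤ C * Real.exp (-σ * t))
    (hη : ∀ t, 0 ≤ t → HasDerivAt η (-(c t) * k * (Real.exp (η t + v t) - 1)) t) :
    Filter.Tendsto η Filter.atTop (nhds 0) :=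
  stmt_1_general k δ M C σ hk hδ hσ c v η hcb hv hη
end

section
/- Let Γ, γ, K > 0 be real numbers satisfying K² < Γγ and 2K < Γ + γ. Then the symmetric 2×2 real matrix Q with entries Q₁₁ = Γ²γ/(K(Γ+γ−2K)), Q₁₂ = Q₂₁ = −Γγ/(Γ+γ−2K), Q₂₂ = Γγ²/(K(Γ+γ−2K)) is positive definite. -/
/-! `Q` is the positive scalar `Γγ / (K(Γ + γ - 2K))` times `!![Γ, -K; -K, γ]`, a symmetric
matrix with positive corner `Γ` and determinant `Γγ - K² > 0`; the latter is positive definite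
by completing the square. -/

open Matrix

theorem Matrix.posDef_fin_two_of_pos_of_sq_lt {R : Type*} [CommRing R] [LinearOrder R]
    [IsStrictOrderedRing R] [StarRing R] [TrivialStar R] {a b d : R}
    (ha : 0 < a) (hdet : b ^ 2 < a * d) : (!![a, b; b, d]).PosDef := by
  refine posDef_iff_dotProduct_mulVec.mpr ⟨?_, fun x hx => ?_⟩
  · ext i j
    fin_cases i <;> fin_cases j <;> simp
  · have hquad : star x ⬝ᵥ (!![a, b; b, d] *ᵥ x)
        = a * x 0 ^ 2 + 2 * b * x 0 * x 1 + d * x 1 ^ 2 := by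
      simp only [star_trivial, dotProduct, mulVec, Fin.sum_univ_two, of_apply, cons_val',
        cons_val_zero, cons_val_one, empty_val', cons_val_fin_one]
      ring
    have hsq : a * (a * x 0 ^ 2 + 2 * b * x 0 * x 1 + d * x 1 ^ 2)
        = (a * x 0 + b * x 1) ^ 2 + (a * d - b ^ 2) * x 1 ^ 2 := by ring
    rw [hquad]
    refine pos_of_mul_pos_right ?_ ha.le
    rw [hsq]
    rcases eq_or_ne (x 1) 0 with h1 | h1
    · have h0 : x 0 ≠ 0 := fun h0 => hx (by ext i; fin_cases i <;> assumption)
      simp only [h1, mul_zero, add_zero, zero_pow two_ne_zero]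
      exact sq_pos_of_ne_zero (mul_ne_zero ha.ne' h0)
    · exact add_pos_of_nonneg_of_pos (sq_nonneg _)
        (mul_pos (sub_pos.mpr hdet) (sq_pos_of_ne_zero h1))

/-- Condition (7.9): if `K² < Γγ` and `2K < Γ + γ` (with `Γ, γ, K > 0`), the
symmetric matrix `Q` from the quadratic-form representation of the Lyapunov
dissipation is positive definite. -/
theorem stmt_6 (Γ γ K : ℝ) (hΓ : 0 < Γ) (hγ : 0 < γ) (hK : 0 < K)
    (h1 : K ^ 2 < Γ * γ) (h2 : 2 * K < Γ + γ) :
    Matrix.PosDef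
      !![Γ ^ 2 * γ / (K * (Γ + γ - 2 * K)), -(Γ * γ / (Γ + γ - 2 * K));
         -(Γ * γ / (Γ + γ - 2 * K)), Γ * γ ^ 2 / (K * (Γ + γ - 2 * K))] := by
  have hD : 0 < Γ + γ - 2 * K := by linarith
  have hscale : !![Γ ^ 2 * γ / (K * (Γ + γ - 2 * K)), -(Γ * γ / (Γ + γ - 2 * K));
        -(Γ * γ / (Γ + γ - 2 * K)), Γ * γ ^ 2 / (K * (Γ + γ - 2 * K))]
      = (Γ * γ / (K * (Γ + γ - 2 * K))) • !![Γ, -K; -K, γ] := by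
    ext i j
    fin_cases i <;> fin_cases j <;> simp <;> field_simp
  rw [hscale]
  refine .smul (posDef_fin_two_of_pos_of_sq_lt hΓ ?_) (by positivity)
  rwa [neg_sq]
end

section
/- Let L > 0 and let W : [0,∞) → [0,∞) be differentiable with W'(t) ≤ −L·W(t)/(1 + √(W(t))) for all t ≥ 0. Then for all t ≥ 0: W(t) ≤ W(0)·exp(max(0, W(0) − 1))·exp(−(L/2)·t). -/
/-!
Along the trajectory `(log W + 2√W)' = W' (1 + √W) / W ≤ -L`, so `log W + 2√W` decreases at
rate `L`. Since `W` is nonincreasing, the part `2(√W₀ - √W)` of that decrease is bounded by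
`log W₀ - log W + 2 max(0, W₀ - 1)`; hence `log W` itself decreases at rate at least `L/2`,
up to the additive constant `max(0, W₀ - 1)`.
-/

open Real Set

lemma sub_le_log_sub_log_add_max {u v : ℝ} (hu : 0 < u) (huv : u ≤ v) :
    v - u ≤ log v - log u + max 0 (v ^ 2 - 1) := by
  have hv : 0 < v := hu.trans_le huv
  have hlog : (v - u) / v ≤ log v - log u := by
    rw [← log_div hv.ne' hu.ne']
    calc (v - u) / v = 1 - (v / u)⁻¹ := by field_simp
      _ ≤ log (v / u) := one_sub_inv_le_log_of_pos (div_pos hv hu)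
  have hquot : (v - u) / v ≤ 1 := (div_le_one hv).2 (by linarith)
  have hquot₀ : 0 ≤ (v - u) / v := div_nonneg (by linarith) hv.le
  have hsplit : v - u = (v - u) / v + (v - u) / v * (v - 1) := by field_simp; ring
  rcases le_total v 1 with hv1 | hv1
  · nlinarith [le_max_left 0 (v ^ 2 - 1)]
  · nlinarith [le_max_right 0 (v ^ 2 - 1)]

lemma HasDerivAt.log_add_two_sqrt {f : ℝ → ℝ} {f' x : ℝ} (hf : HasDerivAt f f' x)
    (hx : 0 < f x) :
    HasDerivAt (fun y => Real.log (f y) + 2 * √(f y)) (f' * (1 + √(f x)) / f x) x := by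
  refine ((hf.log hx.ne').add ((hf.sqrt hx.ne').const_mul 2)).congr_deriv ?_
  have hsq : √(f x) ^ 2 = f x := sq_sqrt hx.le
  field_simp
  linear_combination f' * hsq.symm

lemma log_add_two_sqrt_le {W W' : ℝ → ℝ} {L a b : ℝ} (hab : a ≤ b)
    (hpos : ∀ t ∈ Icc a b, 0 < W t) (hW : ∀ t ∈ Icc a b, HasDerivAt W (W' t) t)
    (hW' : ∀ t ∈ Icc a b, W' t ≤ -L * W t / (1 + √(W t))) :
    log (W b) + 2 * √(W b) ≤ log (W a) + 2 * √(W a) - L * (b - a) := by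
  have hderiv : ∀ t ∈ Icc a b, HasDerivAt (fun y => log (W y) + 2 * √(W y))
      (W' t * (1 + √(W t)) / W t) t := fun t ht => (hW t ht).log_add_two_sqrt (hpos t ht)
  have hslope : ∀ t ∈ Icc a b, W' t * (1 + √(W t)) / W t ≤ -L := fun t ht => by
    have h1 : 0 < 1 + √(W t) := by positivity
    rw [div_le_iff₀ (hpos t ht), ← le_div_iff₀ h1, neg_mul]
    simpa [neg_div] using hW' t ht
  have := (convex_Icc a b).image_sub_le_mul_sub_of_deriv_le
    (fun t ht => (hderiv t ht).continuousAt.continuousWithinAt)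
    (fun t ht => (hderiv t (interior_subset ht)).differentiableAt.differentiableWithinAt)
    (fun t ht => (hderiv t (interior_subset ht)).deriv ▸ hslope t (interior_subset ht))
    a (left_mem_Icc.2 hab) b (right_mem_Icc.2 hab) hab
  linarith

lemma le_mul_exp_of_log_add_two_sqrt_le {w w₀ c : ℝ} (hw : 0 < w) (hww₀ : w ≤ w₀)
    (h : log w + 2 * √w ≤ log w₀ + 2 * √w₀ - c) :
    w ≤ w₀ * exp (max 0 (w₀ - 1)) * exp (-(c / 2)) := by
  have hw₀ : 0 < w₀ := hw.trans_le hww₀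
  have hsqrt := sub_le_log_sub_log_add_max (sqrt_pos.2 hw) (sqrt_le_sqrt hww₀)
  rw [sq_sqrt hw₀.le, log_sqrt hw.le, log_sqrt hw₀.le] at hsqrt
  have hlog : log w ≤ log w₀ + max 0 (w₀ - 1) + -(c / 2) := by linarith
  calc w = exp (log w) := (exp_log hw).symm
    _ ≤ exp (log w₀ + max 0 (w₀ - 1) + -(c / 2)) := exp_le_exp.2 hlog
    _ = w₀ * exp (max 0 (w₀ - 1)) * exp (-(c / 2)) := by rw [exp_add, exp_add, exp_log hw₀]

/-- Integration of the structural differential inequality (7.51): from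
`W' ≤ -L·W/(1 + √W)` on `[0,∞)` with `W ≥ 0`, one gets
`W(t) ≤ W(0)·e^{max(0, W(0)-1)}·e^{-(L/2)t}`. -/
theorem stmt_13 (L : ℝ) (hL : 0 < L) (W W' : ℝ → ℝ)
    (hW0 : ∀ t, 0 ≤ t → 0 ≤ W t)
    (hW : ∀ t, 0 ≤ t → HasDerivAt W (W' t) t)
    (hW' : ∀ t, 0 ≤ t → W' t ≤ -L * W t / (1 + Real.sqrt (W t))) :
    ∀ t, 0 ≤ t →
      W t ≤ W 0 * Real.exp (max 0 (W 0 - 1)) * Real.exp (-(L / 2) * t) := by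
  intro t ht
  have hanti : AntitoneOn W (Ici 0) := by
    refine antitoneOn_of_hasDerivWithinAt_nonpos (f' := W') (convex_Ici 0)
      (fun x hx => (hW x hx).continuousAt.continuousWithinAt) (fun x hx => ?_) (fun x hx => ?_)
    all_goals rw [interior_Ici] at hx
    · exact (hW x hx.le).hasDerivWithinAt
    · exact (hW' x hx.le).trans (div_nonpos_of_nonpos_of_nonneg
        (mul_nonpos_of_nonpos_of_nonneg (neg_nonpos.2 hL.le) (hW0 x hx.le)) (by positivity))
  rcases (hW0 t ht).eq_or_lt with hzero | hpos
  · rw [← hzero]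
    exact mul_nonneg (mul_nonneg (hW0 0 le_rfl) (exp_pos _).le) (exp_pos _).le
  have hpos' : ∀ s ∈ Icc 0 t, 0 < W s := fun s hs => hpos.trans_le (hanti hs.1 ht hs.2)
  have hdecay := log_add_two_sqrt_le ht hpos' (fun s hs => hW s hs.1) (fun s hs => hW' s hs.1)
  rw [sub_zero] at hdecay
  convert le_mul_exp_of_log_add_two_sqrt_le hpos (hanti self_mem_Ici ht ht) hdecay using 3
  ring
end

section
/- Let ε, Γ₂, γ₂, K₂, ρ > 0 and let Γ, γ, K : [0,∞) → ℝ satisfy, for every t ≥ 0: 0 < Γ(t) ≤ Γ₂, 0 < γ(t) ≤ γ₂, ε ≤ K(t) ≤ K₂, K(t)² + ρ ≤ Γ(t)γ(t), and 2K(t) + ρ ≤ Γ(t) + γ(t). For each t let λ(t) = 2·(Γ(t)γ(t)/K(t))·(Γ(t)γ(t) − K(t)²) / [ (Γ(t)+γ(t)−2K(t))(Γ(t)+γ(t)) + √( (Γ(t)+γ(t)−2K(t))²·((Γ(t)−γ(t))² + 4K(t)²) ) ]. Then there exist constants δ_λ > 0 and c > 0 such that δ_λ ≤ λ(t) ≤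 c for all t ≥ 0. -/
set_option maxHeartbeats 1600000 in
/-- Uniform bounds on the smallest eigenvalue `λ_min(Q(t))` (formula (7.10))
under uniform versions of condition (7.9) and hypothesis (H1): there exist
constants `0 < δ_λ` and `c` such that `δ_λ ≤ λ(t) ≤ c` for all `t ≥ 0`. -/
theorem stmt_18 (ε Γ₂ γ₂ K₂ ρ : ℝ)
    (hε : 0 < ε) (hΓ₂ : 0 < Γ₂) (hγ₂ : 0 < γ₂) (hK₂ : 0 < K₂) (hρ : 0 < ρ)
    (Γ γ K lam : ℝ → ℝ)
    (hΓ : ∀ t, 0 ≤ t → 0 < Γ t ∧ Γ t ≤ Γ₂)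
    (hγ : ∀ t, 0 ≤ t → 0 < γ t ∧ γ t ≤ γ₂)
    (hK : ∀ t, 0 ≤ t → ε ≤ K t ∧ K t ≤ K₂)
    (h1 : ∀ t, 0 ≤ t → K t ^ 2 + ρ ≤ Γ t * γ t)
    (h2 : ∀ t, 0 ≤ t → 2 * K t + ρ ≤ Γ t + γ t)
    (hlam : ∀ t, lam t =
      2 * (Γ t * γ t / K t) * (Γ t * γ t - K t ^ 2) /
        ((Γ t + γ t - 2 * K t) * (Γ t + γ t) +
          Real.sqrt ((Γ t + γ t - 2 * K t) ^ 2 *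
            ((Γ t - γ t) ^ 2 + 4 * K t ^ 2)))) :
    ∃ δlam c : ℝ, 0 < δlam ∧ 0 < c ∧ ∀ t, 0 ≤ t → δlam ≤ lam t ∧ lam t ≤ c := by
  set M : ℝ := Γ₂ + γ₂ + 2 * K₂ with hMdef
  have hM0 : 0 < M := by positivity
  refine ⟨2 * ((ε ^ 2 + ρ) * ρ) / (K₂ * (2 * M ^ 2)),
    2 * (Γ₂ * γ₂) * (Γ₂ * γ₂) / (ε * (ρ * (2 * ε + ρ))),
    by positivity, by positivity, ?_⟩
  intro t ht
  obtain ⟨hΓ0, hΓ2⟩ := hΓ t ht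
  obtain ⟨hγ0, hγ2⟩ := hγ t ht
  obtain ⟨hK1, hK2⟩ := hK t ht
  have h1t := h1 t ht
  have h2t := h2 t ht
  have hK0 : 0 < K t := lt_of_lt_of_le hε hK1
  set s : ℝ := Real.sqrt ((Γ t + γ t - 2 * K t) ^ 2 *
      ((Γ t - γ t) ^ 2 + 4 * K t ^ 2)) with hsdef
  have hs0 : 0 ≤ s := Real.sqrt_nonneg _
  clear_value s
  have hS : ρ ≤ Γ t + γ t - 2 * K t := by linarith
  have hSnn : 0 ≤ Γ t + γ t - 2 * K t := le_trans hρ.le hS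
  have hSM : Γ t + γ t - 2 * K t ≤ M := by nlinarith
  have hsumM : Γ t + γ t ≤ M := by nlinarith
  have hinner : (Γ t - γ t) ^ 2 + 4 * K t ^ 2 ≤ M ^ 2 := by nlinarith
  have hS2 : (Γ t + γ t - 2 * K t) ^ 2 ≤ M ^ 2 := by nlinarith
  have hargle : (Γ t + γ t - 2 * K t) ^ 2 * ((Γ t - γ t) ^ 2 + 4 * K t ^ 2)
      ≤ (M ^ 2) ^ 2 := by
    calc (Γ t + γ t - 2 * K t) ^ 2 * ((Γ t - γ t) ^ 2 + 4 * K t ^ 2)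
        ≤ M ^ 2 * M ^ 2 := mul_le_mul hS2 hinner (by positivity) (by positivity)
      _ = (M ^ 2) ^ 2 := by ring
  have hsle : s ≤ M ^ 2 := by
    rw [hsdef]
    calc Real.sqrt _ ≤ Real.sqrt ((M ^ 2) ^ 2) := Real.sqrt_le_sqrt hargle
      _ = M ^ 2 := Real.sqrt_sq (by positivity)
  set D : ℝ := (Γ t + γ t - 2 * K t) * (Γ t + γ t) + s with hDdef
  clear_value D
  have hDlo : ρ * (2 * ε + ρ) ≤ D := by
    have h : ρ * (2 * ε + ρ) ≤ (Γ t + γ t - 2 * K t) * (Γ t + γ t) :=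
      mul_le_mul hS (by linarith) (by positivity) hSnn
    linarith
  have hD0 : 0 < D := lt_of_lt_of_le (by positivity) hDlo
  have hDhi : D ≤ 2 * M ^ 2 := by
    have h : (Γ t + γ t - 2 * K t) * (Γ t + γ t) ≤ M * M :=
      mul_le_mul hSM hsumM (by positivity) hM0.le
    have hMM : M * M = M ^ 2 := by ring
    linarith
  have hlam' : lam t = 2 * (Γ t * γ t) * (Γ t * γ t - K t ^ 2) / (K t * D) := by
    rw [hlam t, ← hsdef, ← hDdef, mul_div_assoc', div_mul_eq_mul_div, div_div]
  have hylo : ρ ≤ Γ t * γ t - K t ^ 2 := by linarith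
  have hxhi : Γ t * γ t ≤ Γ₂ * γ₂ :=
    mul_le_mul hΓ2 hγ2 hγ0.le hΓ₂.le
  constructor
  · rw [hlam']
    apply div_le_div₀
    · have := mul_le_mul (show ε ^ 2 + ρ ≤ Γ t * γ t by nlinarith) hylo hρ.le
        (by positivity)
      nlinarith
    · have := mul_le_mul (show ε ^ 2 + ρ ≤ Γ t * γ t by nlinarith) hylo hρ.le
        (by positivity)
      linarith
    · positivity
    · exact mul_le_mul hK2 hDhi hD0.le hK₂.le
  · rw [hlam']
    apply div_le_div₀ (by positivity)
    · have := mul_le_mul hxhi (show Γ t * γ t - K t ^ 2 ≤ Γ₂ * γ₂ by nlinarith)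
        (by linarith) (by positivity)
      linarith
    · positivity
    · exact mul_le_mul hK1 hDlo (by positivity) hK0.le
end
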